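/- Let R be a Noetherian local ring. If R is a Cohen–Macaulay domain in which every parameter ideal is integrally closed, then R is normal. -/

import Mathlib

open scoped BigOperators

/-- `x₁,…,x_d` is a system of parameters of the Noetherian local ring `R`: `d` equals the Krull
dimension of `R` and the ideal `(x₁,…,x_d)` is `m`-primary (its radical is `m`). -/
def IsSystemOfParameters (R : Type*) [CommRing R] [IsLocalRing R] {d : ℕ}
    (x : Fin d → R) : Prop :=
  (d : WithBot (WithTop ℕ)) = ringKrullDim R ∧
    IsLocalRing.maximalIdeal R ≤ (Ideal.span (Set.range x)).radical ∧
    Ideal.span (Set.range x) ≤ IsLocalRing.maximalIdeal R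

/-- The integral closure of an ideal `I`. -/
def idealIntegralClosure {R : Type*} [CommRing R] (I : Ideal R) : Set R :=
  {z | ∃ n : ℕ, 0 < n ∧ ∃ a : ℕ → R, (∀ j, 1 ≤ j → j ≤ n → a j ∈ I ^ j) ∧
    z ^ n + ∑ j ∈ Finset.range n, a (j + 1) * z ^ (n - (j + 1)) = 0}


section AuxProofs


open IsLocalRing Ideal

variable {R : Type*}

/-- A module over a local ring killed by the maximal ideal is semisimple. -/
lemma aux_isSemisimple_of_smul_zero [CommRing R] [IsLocalRing R] (M : Type*) [AddCommGroup M]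
    [Module R M] (h : ∀ r : R, r ∈ maximalIdeal R → ∀ x : M, r • x = 0) :
    IsSemisimpleModule R M := by
  have hM : Module.IsTorsionBySet R M (maximalIdeal R : Set R) := fun x a => h a.1 a.2 x
  letI := hM.module
  letI : Field (R ⧸ maximalIdeal R) := Ideal.Quotient.field _
  have hs : IsSemisimpleModule (R ⧸ maximalIdeal R) M := inferInstance
  let l : M →ₛₗ[Ideal.Quotient.mk (maximalIdeal R)] M :=
    { toFun := id
      map_add' := fun _ _ => rfl
      map_smul' := fun r x => (hM.mk_smul r x).symm }
  exact (l.isSemisimpleModule_iff_of_bijective Function.bijective_id).mpr hs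

lemma aux_isArtinian_quot_pow [CommRing R] [IsNoetherianRing R] [IsLocalRing R] (k : ℕ) :
    IsArtinian R (R ⧸ (maximalIdeal R ^ k : Ideal R)) := by
  induction k with
  | zero =>
      have : Subsingleton (R ⧸ (maximalIdeal R ^ 0 : Ideal R)) := by
        rw [pow_zero, Ideal.one_eq_top]
        exact Ideal.Quotient.subsingleton_iff.mpr rfl
      infer_instance
  | succ k ih =>
      set I : Ideal R := maximalIdeal R ^ (k + 1)
      -- the layer (m ^ k) / (m ^ (k+1)) inside R ⧸ m ^ (k+1)
      let P : Submodule R (R ⧸ I) := Submodule.map I.mkQ (maximalIdeal R ^ k)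
      have hP : IsArtinian R P := by
        have hsemi : IsSemisimpleModule R P := by
          apply aux_isSemisimple_of_smul_zero
          intro r hr x
          obtain ⟨x, hx⟩ := x
        -- x ∈ P: x = mk y, y ∈ m ^ k
          obtain ⟨y, hy, rfl⟩ := hx
          have : r * y ∈ I := by
            have : r * y ∈ maximalIdeal R * maximalIdeal R ^ k := Ideal.mul_mem_mul hr hy
            simpa [I, pow_succ, mul_comm] using this
          apply Subtype.ext
          show r • (I.mkQ y) = 0
          rw [← map_smul]
          exact (Submodule.Quotient.mk_eq_zero I).mpr this
        have hfin : Module.Finite R P := by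
          have : IsNoetherian R (R ⧸ I) := inferInstance
          exact Module.Finite.iff_fg.mpr (IsNoetherian.noetherian P)
        infer_instance
      -- the quotient map R ⧸ m^(k+1) → R ⧸ m^k
      have hle : I ≤ (maximalIdeal R ^ k : Ideal R) := Ideal.pow_le_pow_right (Nat.le_succ k)
      let g : (R ⧸ I) →ₗ[R] (R ⧸ (maximalIdeal R ^ k : Ideal R)) :=
    Submodule.mapQ I (maximalIdeal R ^ k) LinearMap.id hle
      have hgs : Function.Surjective g := by
        intro z
        obtain ⟨y, rfl⟩ := Submodule.mkQ_surjective _ z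
        exact ⟨I.mkQ y, rfl⟩
      have hg : ∀ y : R, g (I.mkQ y) = (maximalIdeal R ^ k : Ideal R).mkQ y := by
        intro y
        rw [Submodule.mkQ_apply, Submodule.mkQ_apply, Submodule.mapQ_apply, LinearMap.id_apply]
      have hker : LinearMap.ker g = P := by
        ext z
        obtain ⟨y, rfl⟩ := Submodule.mkQ_surjective I z
        constructor
        · intro hz
          have hz' : ((maximalIdeal R ^ k : Ideal R)).mkQ y = 0 := by
            rw [← hg]; exact hz
          exact ⟨y, (Submodule.Quotient.mk_eq_zero _).mp hz', rfl⟩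
        · rintro ⟨w, hw, hwz⟩
          have hwy : w - y ∈ I := by
            rwa [Submodule.mkQ_apply, Submodule.mkQ_apply, Submodule.Quotient.eq] at hwz
          have hy : y ∈ (maximalIdeal R ^ k : Ideal R) := by
            have := sub_mem hw (hle hwy)
            simpa using this
          show g (I.mkQ y) = 0
          rw [hg]
          exact (Submodule.Quotient.mk_eq_zero _).mpr hy
      exact isArtinian_of_range_eq_ker P.subtype g (by rw [Submodule.range_subtype, hker])


/-- Krull's principal ideal theorem for a Noetherian local domain: if the radical of a
principal ideal `(x)` with `x ∈ m` contains the maximal ideal, then every non-maximal prime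
is zero. -/
lemma aux_pit_principal {R : Type*} [CommRing R] [IsNoetherianRing R] [IsDomain R] [IsLocalRing R]
    (x : R) (hxm : x ∈ maximalIdeal R) (hx : maximalIdeal R ≤ (Ideal.span {x}).radical) :
    ∀ Q : Ideal R, Q.IsPrime → Q ≠ maximalIdeal R → Q = ⊥ := by
  intro Q hQ hQm
  have hQle : Q ≤ maximalIdeal R := le_maximalIdeal hQ.ne_top
  rcases eq_or_ne x 0 with rfl | hx0
  · have hm : maximalIdeal R = ⊥ := by
      have : (Ideal.span ({0} : Set R)).radical = ⊥ := by
        rw [Ideal.span_singleton_eq_bot.mpr rfl, Ideal.radical_bot_of_noZeroDivisors]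
      exact le_bot_iff.mp (this ▸ hx)
    exact le_bot_iff.mp (hm ▸ hQle)
  have hxQ : x ∉ Q := by
    intro hmem
    exact hQm (le_antisymm hQle (hx.trans (hQ.radical_le_iff.mpr
      (Ideal.span_le.mpr (Set.singleton_subset_iff.mpr hmem)))))
  -- localization at Q
  set A := Localization.AtPrime Q with hA
  let φ : R →+* A := algebraMap R A
  have hdisj : Disjoint (Q.primeCompl : Set R) (Q : Set R) := by
    rw [Set.disjoint_iff]
    rintro y ⟨h1, h2⟩
    exact h1 h2
  have hne : Q.primeCompl ≤ nonZeroDivisors R := Q.primeCompl_le_nonZeroDivisors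
  have hinj : Function.Injective φ := IsLocalization.injective A hne
  haveI : IsDomain A := IsLocalization.isDomain_localization hne
  haveI : IsNoetherianRing A := IsLocalization.isNoetherianRing Q.primeCompl A inferInstance
  -- symbolic powers
  let Qn : ℕ → Ideal R := fun n => ((Q.map φ) ^ n).comap φ
  have hQnanti : ∀ n, Qn (n + 1) ≤ Qn n := fun n =>
    Ideal.comap_mono (Ideal.pow_le_pow_right (Nat.le_succ n))
  -- m ^ k ≤ (x)
  obtain ⟨k, hk⟩ := Ideal.exists_pow_le_of_le_radical_of_fg hx (IsNoetherian.noetherian _)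
  -- the descending chain (Qn n ⊔ (x)) stabilizes
  haveI := aux_isArtinian_quot_pow (R := R) k
  let mk : R →ₗ[R] R ⧸ (maximalIdeal R ^ k : Ideal R) := Submodule.mkQ _
  let J : ℕ → Ideal R := fun n => Qn n ⊔ Ideal.span {x}
  have hJanti : ∀ n, J (n + 1) ≤ J n := fun n => sup_le_sup_right (hQnanti n) _
  have hJanti' : Antitone J := antitone_nat_of_succ_le hJanti
  let F : ℕ →o (Submodule R (R ⧸ (maximalIdeal R ^ k : Ideal R)))ᵒᵈ :=
    ⟨fun n => Submodule.map mk (J n), fun a b hab => Submodule.map_mono (hJanti' hab)⟩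
  obtain ⟨N, hN⟩ := IsArtinian.monotone_stabilizes F
  set n := N + 1 with hn
  have hmap : Submodule.map mk (J n) = Submodule.map mk (J (n + 1)) := by
    have h1 := hN n (Nat.le_succ N)
    have h2 := hN (n + 1) (by omega)
    exact h1.symm.trans h2
  have hJeq : J n = J (n + 1) := by
    have hker : ∀ m', (maximalIdeal R ^ k : Ideal R) ≤ J m' := fun m' =>
      le_trans hk (le_trans (le_refl _) le_sup_right)
    have e1 : Submodule.comap mk (Submodule.map mk (J n)) = J n := by
      rw [Submodule.comap_map_eq, Submodule.ker_mkQ, sup_eq_left.mpr (hker n)]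
    have e2 : Submodule.comap mk (Submodule.map mk (J (n+1))) = J (n+1) := by
      rw [Submodule.comap_map_eq, Submodule.ker_mkQ, sup_eq_left.mpr (hker (n+1))]
    rw [← e1, ← e2, hmap]
  -- Qn n ≤ Qn (n+1) ⊔ (x) • Qn n
  have hstep : Qn n ≤ Qn (n + 1) ⊔ Ideal.span {x} • Qn n := by
    intro q hq
    have hq' : q ∈ J (n + 1) := by
      rw [← hJeq]; exact le_sup_left (α := Ideal R) hq
    rw [Submodule.mem_sup] at hq'
    obtain ⟨y, hy, z, hz, hyz⟩ := hq'
    obtain ⟨c, hc⟩ := Ideal.mem_span_singleton'.mp hz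
    have hcx : c * x ∈ Qn n := by
      have : c * x = q - y := by rw [hc, ← hyz]; ring
      rw [this]
      exact sub_mem hq (hQnanti n hy)
    have hcQ : c ∈ Qn n := by
      have hu : IsUnit (φ x) := IsLocalization.map_units A (⟨x, hxQ⟩ : Q.primeCompl)
      have : φ c * φ x ∈ (Q.map φ) ^ n := by
        rw [← _root_.map_mul]; exact hcx
    -- cancel the unit
      rw [Ideal.mem_comap]
      rwa [mul_comm, Ideal.unit_mul_mem_iff_mem _ hu] at this
    have : c * x ∈ Ideal.span {x} • Qn n := by
      rw [mul_comm, smul_eq_mul]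
      exact Ideal.mul_mem_mul (Ideal.mem_span_singleton_self x) hcQ
    rw [← hyz, ← hc]
    exact Submodule.add_mem _ (le_sup_left (α := Ideal R) hy) (le_sup_right (α := Ideal R) this)
  -- Nakayama
  have hxjac : Ideal.span {x} ≤ Ideal.jacobson ⊥ :=
    le_trans (Ideal.span_le.mpr (Set.singleton_subset_iff.mpr hxm))
      (maximalIdeal_le_jacobson ⊥)
  have hQneq : Qn n ≤ Qn (n + 1) :=
    Submodule.le_of_le_smul_of_le_jacobson_bot (IsNoetherian.noetherian _) hxjac hstep
  have hQneq' : Qn n = Qn (n + 1) := le_antisymm hQneq (hQnanti n)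
  -- push back to the localization
  have hmapn : ∀ m', Ideal.map φ (Qn m') = (Q.map φ) ^ m' := fun m' =>
    IsLocalization.map_comap Q.primeCompl A _
  have hpow : (Q.map φ) ^ n = (Q.map φ) ^ (n + 1) := by
    rw [← hmapn n, ← hmapn (n+1), hQneq']
  -- maximal ideal of A
  have hmax : Q.map φ = maximalIdeal A := Localization.AtPrime.map_eq_maximalIdeal
  -- Nakayama in A : (max A) ^ n = ⊥
  have hple : (maximalIdeal A) ^ n ≤ ⊥ := by
    apply Submodule.le_of_le_smul_of_le_jacobson_bot (IsNoetherian.noetherian _)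
      (maximalIdeal_le_jacobson ⊥)
    rw [bot_sup_eq, smul_eq_mul, ← pow_succ']
    rw [← hmax, ← hpow]
  -- in a domain, this forces max A = ⊥, hence Q = ⊥
  have hmaxbot : maximalIdeal A = ⊥ := by
    by_contra hne'
    obtain ⟨a, ha, ha0⟩ := Submodule.exists_mem_ne_zero_of_ne_bot hne'
    have : a ^ n = 0 := by
      have : a ^ n ∈ (maximalIdeal A) ^ n := Ideal.pow_mem_pow ha n
      simpa using hple this
    exact pow_ne_zero n ha0 this
  have hQmap : Q.map φ = ⊥ := by rw [hmax, hmaxbot]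
  have : Q = Ideal.comap φ (Q.map φ) :=
    (IsLocalization.comap_map_of_isPrime_disjoint Q.primeCompl A hQ hdisj).symm
  rw [hQmap] at this
  rw [this]
  exact le_bot_iff.mp fun y hy => hinj (by simpa using hy)

universe u

/-- Generalized Krull height theorem, for domains: if `P` is a prime of a Noetherian domain
minimal over an ideal generated by `n` elements, then every chain of primes ending at `P`
has length at most `n`. -/
lemma aux_pit (n : ℕ) : ∀ {R : Type u} [CommRing R] [IsNoetherianRing R] [IsDomain R]
    (P : Ideal R), P.IsPrime → ∀ (x : Fin n → R),
    Ideal.span (Set.range x) ≤ P →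
    (∀ Q : Ideal R, Q.IsPrime → Ideal.span (Set.range x) ≤ Q → Q ≤ P → Q = P) →
    ∀ (h : ℕ) (c : Fin (h+1) → Ideal R), StrictMono c → (∀ i, (c i).IsPrime) →
    c (Fin.last h) = P → h ≤ n := by
  induction n with
  | zero =>
      intro R _ _ _ P hP x hxP hmin h c hc hcp hlast
      by_contra hcon
      have h1 : 1 ≤ h := by omega
      have hlt : c ⟨0, by omega⟩ < c (Fin.last h) := by
        apply hc
        simp [Fin.lt_def, Fin.last]; omega
      have : c ⟨0, by omega⟩ = P := by
        apply hmin _ (hcp _)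
        · have : Ideal.span (Set.range x) = ⊥ := by
            have : Set.range x = ∅ := Set.range_eq_empty x
            rw [this, Ideal.span_empty]
          rw [this]; exact bot_le
        · rw [← hlast]; exact le_of_lt hlt
      rw [this, hlast] at hlt
      exact lt_irrefl _ hlt
  | succ n ih =>
      intro R _ _ _ P hP x hxP hmin h c hc hcp hlast
      rcases Nat.eq_zero_or_pos h with rfl | hpos
      · omega
      obtain ⟨g, rfl⟩ : ∃ g, h = g + 1 := ⟨h - 1, by omega⟩
      haveI := hP
      -- localize at P
      set A := Localization.AtPrime P with hAdef
      let φ : R →+* A := algebraMap R A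
      haveI : IsNoetherianRing A := IsLocalization.isNoetherianRing P.primeCompl A inferInstance
      haveI : IsDomain A := IsLocalization.isDomain_localization P.primeCompl_le_nonZeroDivisors
      have hdisj : ∀ I : Ideal R, I ≤ P → Disjoint (P.primeCompl : Set R) (I : Set R) := by
        intro I hI
        rw [Set.disjoint_iff]
        rintro y ⟨h1, h2⟩
        exact h1 (hI h2)
      have hcle : ∀ i, c i ≤ P := by
        intro i
        rw [← hlast]
        exact hc.monotone (Fin.le_last i)
      -- transferred chain
      let c' : Fin (g + 2) → Ideal A := fun i => (c i).map φ
      have hc'p : ∀ i, (c' i).IsPrime := fun i =>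
        IsLocalization.isPrime_of_isPrime_disjoint P.primeCompl A (c i) (hcp i)
          (hdisj _ (hcle i))
      have hc'c : ∀ i, (c' i).comap φ = c i := fun i =>
        IsLocalization.comap_map_of_isPrime_disjoint P.primeCompl A (hcp i)
          (hdisj _ (hcle i))
      have hc' : StrictMono c' := by
        intro i j hij
        refine lt_of_le_of_ne (Ideal.map_mono (hc.monotone (le_of_lt hij))) ?_
        intro heq
        have := congrArg (Ideal.comap φ) heq
        rw [hc'c i, hc'c j] at this
        exact (ne_of_lt (hc hij)) this
      have hc'last : c' (Fin.last (g+1)) = IsLocalRing.maximalIdeal A := by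
        show (c (Fin.last (g+1))).map φ = _
        rw [hlast]
        exact Localization.AtPrime.map_eq_maximalIdeal
      -- transferred generators
      let x' : Fin (n + 1) → A := fun i => φ (x i)
      have hx'span : Ideal.span (Set.range x') ≤ IsLocalRing.maximalIdeal A := by
        have : Ideal.span (Set.range x') ≤ Ideal.map φ (Ideal.span (Set.range x)) := by
          rw [Ideal.map_span]
          apply Ideal.span_mono
          rintro _ ⟨i, rfl⟩
          exact ⟨x i, ⟨i, rfl⟩, rfl⟩
        refine this.trans ?_
        rw [← Localization.AtPrime.map_eq_maximalIdeal]
        exact Ideal.map_mono hxP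
      have hx'min : ∀ q : Ideal A, q.IsPrime → Ideal.span (Set.range x') ≤ q →
          q ≤ IsLocalRing.maximalIdeal A → q = IsLocalRing.maximalIdeal A := by
        intro q hq hxq hqle
        have hQc : (q.comap φ).IsPrime := hq.comap φ
        have hspan : Ideal.span (Set.range x) ≤ q.comap φ := by
          rw [Ideal.span_le]
          rintro _ ⟨i, rfl⟩
          rw [SetLike.mem_coe, Ideal.mem_comap]
          exact hxq (Ideal.subset_span ⟨i, rfl⟩)
        have hQcP : q.comap φ ≤ P := by
          have := Ideal.comap_mono (f := φ) hqle
          exact this.trans Localization.AtPrime.under_maximalIdeal.le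
        have : q.comap φ = P := hmin _ hQc hspan hQcP
        calc q = (q.comap φ).map φ := (IsLocalization.map_comap P.primeCompl A q).symm
          _ = P.map φ := by rw [this]
          _ = IsLocalRing.maximalIdeal A := Localization.AtPrime.map_eq_maximalIdeal
      have hx'rad : IsLocalRing.maximalIdeal A ≤ (Ideal.span (Set.range x')).radical := by
        rw [Ideal.radical_eq_sInf]
        apply le_sInf
        rintro J ⟨hJ1, hJ2⟩
        rw [hx'min J hJ2 hJ1 (IsLocalRing.le_maximalIdeal hJ2.ne_top)]
      -- saturate the top gap of the chain
      let csub : Ideal A := c' ⟨g, by omega⟩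
      have hcsub : csub < IsLocalRing.maximalIdeal A := by
        rw [← hc'last]
        exact hc' (by simp [Fin.lt_def, Fin.last])
      let S : Set (Ideal A) :=
        {Q | Q.IsPrime ∧ csub ≤ Q ∧ Q < IsLocalRing.maximalIdeal A}
      have hSne : S.Nonempty := ⟨csub, hc'p _, le_refl _, hcsub⟩
      obtain ⟨Qs, hQsS, hQsmax⟩ :=
        (set_has_maximal_iff_noetherian.mpr inferInstance) S hSne
      obtain ⟨hQsP, hQssub, hQslt⟩ := hQsS
      -- some generator avoids Qs
      have hexj : ∃ j : Fin (n + 1), x' j ∉ Qs := by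
        by_contra hcon
        push_neg at hcon
        have : Ideal.span (Set.range x') ≤ Qs := by
          rw [Ideal.span_le]; rintro _ ⟨i, rfl⟩; exact hcon i
        have : IsLocalRing.maximalIdeal A ≤ Qs :=
          hx'rad.trans (hQsP.radical_le_iff.mpr this)
        exact (ne_of_lt hQslt) (le_antisymm (le_of_lt hQslt) this)
      obtain ⟨j, hjQs⟩ := hexj
      set a : A := x' j with hadef
      have ham : a ∈ IsLocalRing.maximalIdeal A :=
        hx'span (Ideal.subset_span ⟨j, rfl⟩)
      -- every prime containing Qs ⊔ (a) is the maximal ideal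
      have key1 : ∀ P'' : Ideal A, P''.IsPrime → Qs ⊔ Ideal.span {a} ≤ P'' →
          P'' = IsLocalRing.maximalIdeal A := by
        intro P'' hP'' hle
        have hP''le : P'' ≤ IsLocalRing.maximalIdeal A :=
          IsLocalRing.le_maximalIdeal hP''.ne_top
        rcases eq_or_lt_of_le hP''le with heq | hlt
        · exact heq
        · exfalso
          have hP''S : P'' ∈ S := ⟨hP'', hQssub.trans (le_sup_left.trans hle), hlt⟩
          apply hQsmax P'' hP''S
          refine lt_of_le_of_ne (le_sup_left.trans hle) ?_
          intro heq
          apply hjQs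
          rw [heq]
          exact hle (le_sup_right (α := Ideal A)
            (Ideal.mem_span_singleton_self a))
      have rad1 : IsLocalRing.maximalIdeal A ≤ (Ideal.radical (Qs ⊔ Ideal.span {a} : Ideal A)) := by
        rw [Ideal.radical_eq_sInf]
        apply le_sInf
        rintro J ⟨hJ1, hJ2⟩
        rw [key1 J hJ2 hJ1]
      -- powers of the generators decompose
      have hpows : ∀ i : Fin (n + 1), ∃ (k : ℕ) (y cc : A),
          y ∈ Qs ∧ x' i ^ k = y + cc * a := by
        intro i
        have : x' i ∈ (Ideal.radical (Qs ⊔ Ideal.span {a} : Ideal A)) :=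
          rad1 (hx'span (Ideal.subset_span ⟨i, rfl⟩))
        obtain ⟨k, hk⟩ := this
        rw [Submodule.mem_sup] at hk
        obtain ⟨y, hy, z, hz, hyz⟩ := hk
        obtain ⟨cc, hcc⟩ := Ideal.mem_span_singleton'.mp hz
        exact ⟨k, y, cc, hy, by rw [← hyz, hcc]⟩
      choose kk yy cc hyy heqq using hpows
      -- the (n)-generated ideal under Qs
      let J' : Ideal A := Ideal.span (Set.range (yy ∘ j.succAbove))
      have hJ'Qs : J' ≤ Qs := by
        rw [Ideal.span_le]
        rintro _ ⟨i, rfl⟩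
        exact hyy _
      -- Qs is minimal over J'
      have key2 : ∀ P' : Ideal A, P'.IsPrime → J' ≤ P' → P' ≤ Qs → P' = Qs := by
        intro P' hP' hJP' hP'Qs
        have sub1 : ∀ P'' : Ideal A, P''.IsPrime → P' ⊔ Ideal.span {a} ≤ P'' →
            P'' = IsLocalRing.maximalIdeal A := by
          intro P'' hP'' hle
          have hx'in : ∀ i : Fin (n + 1), x' i ∈ P'' := by
            intro i
            rcases eq_or_ne i j with rfl | hij
            · exact hle (le_sup_right (α := Ideal A) (Ideal.mem_span_singleton_self a))
            · obtain ⟨i', hi'⟩ := Fin.exists_succAbove_eq hij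
              apply hP''.mem_of_pow_mem (kk i)
              rw [heqq i]
              apply Submodule.add_mem
              · apply hle
                apply le_sup_left (α := Ideal A)
                apply hJP'
                apply Ideal.subset_span
                exact ⟨i', by rw [Function.comp_apply, hi']⟩
              · exact Ideal.mul_mem_left _ _
                  (hle (le_sup_right (α := Ideal A) (Ideal.mem_span_singleton_self a)))
          have hsp : Ideal.span (Set.range x') ≤ P'' := by
            rw [Ideal.span_le]; rintro _ ⟨i, rfl⟩; exact hx'in i
          exact le_antisymm (IsLocalRing.le_maximalIdeal hP''.ne_top)
            (hx'rad.trans (hP''.radical_le_iff.mpr hsp))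
        have radP : IsLocalRing.maximalIdeal A ≤ (Ideal.radical (P' ⊔ Ideal.span {a} : Ideal A)) := by
          rw [Ideal.radical_eq_sInf]
          apply le_sInf
          rintro J ⟨hJ1, hJ2⟩
          rw [sub1 J hJ2 hJ1]
        -- pass to the quotient domain A ⧸ P'
        haveI := hP'
        let B := A ⧸ P'
        let ρ : A →+* B := Ideal.Quotient.mk P'
        haveI : Nontrivial B := Ideal.Quotient.nontrivial_iff.mpr hP'.ne_top
        haveI : IsLocalHom ρ := IsLocalHom.of_surjective ρ Ideal.Quotient.mk_surjective
        haveI : IsLocalRing B := IsLocalRing.of_surjective ρ Ideal.Quotient.mk_surjective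
        have hker : RingHom.ker ρ = P' := Ideal.mk_ker
        have hρm : ∀ w : A, w ∈ IsLocalRing.maximalIdeal A → ρ w ∈ IsLocalRing.maximalIdeal B := by
          intro w hw
          rw [IsLocalRing.mem_maximalIdeal, mem_nonunits_iff]
          intro hu
          exact (IsLocalRing.mem_maximalIdeal w).mp hw (IsLocalHom.map_nonunit w hu)
        have hmB : ∀ z : B, z ∈ IsLocalRing.maximalIdeal B →
            ∃ w : A, w ∈ IsLocalRing.maximalIdeal A ∧ ρ w = z := by
          intro z hz
          obtain ⟨w, rfl⟩ := Ideal.Quotient.mk_surjective z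
          refine ⟨w, ?_, rfl⟩
          rw [IsLocalRing.mem_maximalIdeal, mem_nonunits_iff]
          intro hu
          exact (IsLocalRing.mem_maximalIdeal _).mp hz (hu.map ρ)
        have hradB : IsLocalRing.maximalIdeal B ≤ (Ideal.span {ρ a}).radical := by
          intro z hz
          obtain ⟨w, hwm, rfl⟩ := hmB z hz
          obtain ⟨t, ht⟩ := radP hwm
          refine ⟨t, ?_⟩
          rw [Submodule.mem_sup] at ht
          obtain ⟨p, hp, z', hz', hpz⟩ := ht
          obtain ⟨c2, hc2⟩ := Ideal.mem_span_singleton'.mp hz'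
          rw [← map_pow, ← hpz, map_add]
          have : ρ p = 0 := by
            rw [← RingHom.mem_ker, hker]; exact hp
          rw [this, zero_add, ← hc2, _root_.map_mul]
          exact Ideal.mul_mem_left _ _ (Ideal.mem_span_singleton_self (ρ a))
        have hpit := aux_pit_principal (ρ a) (hρm a ham) hradB
        -- compare the images of Qs and the maximal ideal in B
        have hQsB : ((Ideal.map ρ Qs)).IsPrime := by
          haveI := hQsP
          exact Ideal.map_isPrime_of_surjective Ideal.Quotient.mk_surjective
            (by rw [hker]; exact hP'Qs)
        by_contra hne
        have hQsmapne : (Ideal.map ρ Qs) ≠ ⊥ := by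
          intro hbot
          apply hne
          apply le_antisymm hP'Qs
          intro q hq
          have : ρ q = 0 := by
            have : ρ q ∈ (Ideal.map ρ Qs) := Ideal.mem_map_of_mem ρ hq
            rw [hbot] at this
            simpa using this
          rw [← hker]
          exact this
        have hQsmapmax : (Ideal.map ρ Qs) = IsLocalRing.maximalIdeal B := by
          by_contra hne2
          exact hQsmapne (hpit _ hQsB hne2)
        -- but the image of the maximal ideal is a proper prime above it
        have hmBprime : ((IsLocalRing.maximalIdeal A).map ρ).IsPrime := by
          haveI : (IsLocalRing.maximalIdeal A).IsPrime := inferInstance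
          exact Ideal.map_isPrime_of_surjective Ideal.Quotient.mk_surjective
            (by rw [hker]; exact hP'Qs.trans (le_of_lt hQslt))
        have hcomapQs : ((Ideal.map ρ Qs)).comap ρ = Qs := by
          rw [Ideal.comap_map_of_surjective ρ Ideal.Quotient.mk_surjective]
          rw [← RingHom.ker_eq_comap_bot, hker]
          exact sup_eq_left.mpr hP'Qs
        have hcomapm : (((IsLocalRing.maximalIdeal A).map ρ)).comap ρ
            = IsLocalRing.maximalIdeal A := by
          rw [Ideal.comap_map_of_surjective ρ Ideal.Quotient.mk_surjective]
          rw [← RingHom.ker_eq_comap_bot, hker]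
          exact sup_eq_left.mpr (hP'Qs.trans (le_of_lt hQslt))
        have : (IsLocalRing.maximalIdeal A).map ρ ≤ IsLocalRing.maximalIdeal B :=
          IsLocalRing.le_maximalIdeal hmBprime.ne_top
        rw [← hQsmapmax] at this
        have : IsLocalRing.maximalIdeal A ≤ Qs := by
          have := Ideal.comap_mono (f := ρ) this
          rwa [hcomapQs, hcomapm] at this
        exact (ne_of_lt hQslt) (le_antisymm (le_of_lt hQslt) this)
      -- apply the induction hypothesis with the chain ending at Qs
      let d : Fin (g + 1) → Ideal A := fun i =>
        if (i : ℕ) = g then Qs else c' ⟨i, by omega⟩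
      have hdmono : StrictMono d := by
        intro i1 i2 h12
        have hi1 : (i1 : ℕ) < g := by
          have := h12
          rw [Fin.lt_def] at this
          omega
        have hd1 : d i1 = c' ⟨i1, by omega⟩ := by
          simp only [d, if_neg (by omega : ¬ (i1 : ℕ) = g)]
        rcases eq_or_ne ((i2 : ℕ)) g with h2 | h2
        · have hd2 : d i2 = Qs := by simp only [d, if_pos h2]
          rw [hd1, hd2]
          calc c' ⟨i1, by omega⟩ < c' ⟨g, by omega⟩ := hc' (by rw [Fin.lt_def]; simpa using hi1)
            _ ≤ Qs := hQssub
        · have hi2 : (i2 : ℕ) < g := by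
            have := i2.isLt; omega
          have hd2 : d i2 = c' ⟨i2, by omega⟩ := by
            simp only [d, if_neg h2]
          rw [hd1, hd2]
          apply hc'
          rw [Fin.lt_def]
          simpa using (Fin.lt_def.mp h12)
      have hdp : ∀ i, (d i).IsPrime := by
        intro i
        by_cases hi : (i : ℕ) = g
        · simp only [d, if_pos hi]; exact hQsP
        · simp only [d, if_neg hi]; exact hc'p _
      have hdlast : d (Fin.last g) = Qs := by
        simp [d, Fin.last]
      have := ih Qs hQsP (yy ∘ j.succAbove) hJ'Qs key2 g d hdmono hdp hdlast
      omega

lemma aux_chain_le_krullDim {R : Type*} [CommRing R] {h : ℕ} (c : Fin (h+1) → Ideal R)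
    (hc : StrictMono c) (hp : ∀ i, (c i).IsPrime) :
    (h : WithBot (WithTop ℕ)) ≤ ringKrullDim R :=
  Order.LTSeries.length_le_krullDim
    (⟨h, fun i => ⟨c i, hp i⟩, fun i => hc (Fin.castSucc_lt_succ : Fin.castSucc i < i.succ)⟩ : LTSeries (PrimeSpectrum R))

/-- In a Noetherian local domain, if the radical of an ideal generated by `n` elements of the
maximal ideal contains the maximal ideal, then every strictly increasing chain of primes has
length at most `n`. -/
lemma aux_chain_bound {R : Type u} [CommRing R] [IsNoetherianRing R] [IsDomain R] [IsLocalRing R]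
    {n : ℕ} (x : Fin n → R)
    (hspan : Ideal.span (Set.range x) ≤ IsLocalRing.maximalIdeal R)
    (hmin : ∀ Q : Ideal R, Q.IsPrime → Ideal.span (Set.range x) ≤ Q →
      Q ≤ IsLocalRing.maximalIdeal R → Q = IsLocalRing.maximalIdeal R)
    {h : ℕ} (c : Fin (h+1) → Ideal R) (hc : StrictMono c) (hp : ∀ i, (c i).IsPrime) :
    h ≤ n := by
  rcases eq_or_ne (c (Fin.last h)) (IsLocalRing.maximalIdeal R) with heq | hne
  · exact aux_pit n (IsLocalRing.maximalIdeal R) (IsLocalRing.maximalIdeal.isMaximal R).isPrime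
      x hspan hmin h c hc hp heq
  · -- extend the chain by the maximal ideal
    have hlt : c (Fin.last h) < IsLocalRing.maximalIdeal R :=
      lt_of_le_of_ne (IsLocalRing.le_maximalIdeal (hp _).ne_top) hne
    let c' : Fin (h+2) → Ideal R := fun t =>
      if ht : (t : ℕ) < h + 1 then c ⟨t, ht⟩ else IsLocalRing.maximalIdeal R
    have hc'mono : StrictMono c' := by
      intro t1 t2 h12
      have h12' := Fin.lt_def.mp h12
      by_cases ht2 : (t2 : ℕ) < h + 1
      · have ht1 : (t1 : ℕ) < h + 1 := by omega
        simp only [c', dif_pos ht1, dif_pos ht2]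
        exact hc (by rw [Fin.lt_def]; simpa using h12')
      · have ht1 : (t1 : ℕ) < h + 1 := by have := t1.isLt; omega
        simp only [c', dif_pos ht1, dif_neg ht2]
        calc c ⟨t1, ht1⟩ ≤ c (Fin.last h) := hc.monotone (by rw [Fin.le_def]; simp [Fin.last]; omega)
          _ < IsLocalRing.maximalIdeal R := hlt
    have hc'p : ∀ t, (c' t).IsPrime := by
      intro t
      by_cases ht : (t : ℕ) < h + 1
      · simp only [c', dif_pos ht]; exact hp _
      · simp only [c', dif_neg ht]; exact (IsLocalRing.maximalIdeal.isMaximal R).isPrime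
    have hc'last : c' (Fin.last (h+1)) = IsLocalRing.maximalIdeal R := by
      simp [c', Fin.last]
    have := aux_pit n (IsLocalRing.maximalIdeal R) (IsLocalRing.maximalIdeal.isMaximal R).isPrime
      x hspan hmin (h+1) c' hc'mono hc'p hc'last
    omega

lemma aux_dim_le {R : Type u} [CommRing R] [IsNoetherianRing R] [IsDomain R] [IsLocalRing R]
    {n : ℕ} (x : Fin n → R) (hxm : ∀ i, x i ∈ IsLocalRing.maximalIdeal R)
    (hrad : IsLocalRing.maximalIdeal R ≤ (Ideal.span (Set.range x)).radical) :
    ringKrullDim R ≤ (n : WithBot (WithTop ℕ)) := by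
  show Order.krullDim (PrimeSpectrum R) ≤ _
  apply iSup_le
  intro p
  have hspan : Ideal.span (Set.range x) ≤ IsLocalRing.maximalIdeal R := by
    rw [Ideal.span_le]; rintro _ ⟨i, rfl⟩; exact hxm i
  have hmin : ∀ Q : Ideal R, Q.IsPrime → Ideal.span (Set.range x) ≤ Q →
      Q ≤ IsLocalRing.maximalIdeal R → Q = IsLocalRing.maximalIdeal R := by
    intro Q hQ h1 h2
    exact le_antisymm h2 (hrad.trans (hQ.radical_le_iff.mpr h1))
  have : p.length ≤ n := by
    apply aux_chain_bound x hspan hmin (h := p.length) (fun i => (p i).asIdeal)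
      (fun i j hij => p.strictMono hij) (fun i => (p i).isPrime)
  exact WithBot.coe_le_coe.mpr (WithTop.coe_le_coe.mpr this)

lemma aux_chain_extend {R : Type*} [CommRing R] {h : ℕ} (c : Fin (h+1) → Ideal R)
    (hc : StrictMono c) (hp : ∀ i, (c i).IsPrime) {P : Ideal R} (hP : P.IsPrime)
    (hlt : c (Fin.last h) < P) :
    ∃ c' : Fin (h+2) → Ideal R, StrictMono c' ∧ (∀ t, (c' t).IsPrime) ∧
      c' (Fin.last (h+1)) = P := by
  refine ⟨fun t => if ht : (t : ℕ) < h + 1 then c ⟨t, ht⟩ else P, ?_, ?_, ?_⟩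
  · intro t1 t2 h12
    have h12' := Fin.lt_def.mp h12
    by_cases ht2 : (t2 : ℕ) < h + 1
    · have ht1 : (t1 : ℕ) < h + 1 := by omega
      simp only [dif_pos ht1, dif_pos ht2]
      exact hc (by rw [Fin.lt_def]; simpa using h12')
    · have ht1 : (t1 : ℕ) < h + 1 := by have := t1.isLt; omega
      simp only [dif_pos ht1, dif_neg ht2]
      calc c ⟨t1, ht1⟩ ≤ c (Fin.last h) :=
            hc.monotone (by rw [Fin.le_def]; simp [Fin.last]; omega)
        _ < P := hlt
  · intro t
    by_cases ht : (t : ℕ) < h + 1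
    · simp only [dif_pos ht]; exact hp _
    · simp only [dif_neg ht]; exact hP
  · simp [Fin.last]

/-- In a Noetherian local domain of finite Krull dimension `d`, every nonzero element of the
maximal ideal can be completed to a system of parameters. -/
lemma aux_exists_param {R : Type u} [CommRing R] [IsNoetherianRing R] [IsDomain R] [IsLocalRing R]
    {d : ℕ} (hd : ringKrullDim R = (d : WithBot (WithTop ℕ)))
    (q : R) (hq0 : q ≠ 0) (hqm : q ∈ IsLocalRing.maximalIdeal R) :
    ∃ x : Fin d → R, 1 ≤ d ∧ (∀ i : Fin d, (i : ℕ) = 0 → x i = q) ∧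
      (∀ i, x i ∈ IsLocalRing.maximalIdeal R) ∧
      IsLocalRing.maximalIdeal R ≤ (Ideal.span (Set.range x)).radical := by
  have hbotprime : (⊥ : Ideal R).IsPrime := Ideal.bot_prime
  have hmprime : (IsLocalRing.maximalIdeal R).IsPrime :=
    (IsLocalRing.maximalIdeal.isMaximal R).isPrime
  have hmbot : IsLocalRing.maximalIdeal R ≠ ⊥ := by
    intro hb; rw [hb] at hqm; exact hq0 (by simpa using hqm)
  have hd1 : 1 ≤ d := by
    by_contra hcon
    have h1 : ((1 : ℕ) : WithBot (WithTop ℕ)) ≤ ringKrullDim R := by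
      apply aux_chain_le_krullDim
        (c := fun t : Fin 2 => if (t : ℕ) = 0 then ⊥ else IsLocalRing.maximalIdeal R)
      · intro t1 t2 h12
        have h12' := Fin.lt_def.mp h12
        have ht1 : (t1 : ℕ) = 0 := by omega
        have ht2 : ¬ ((t2 : ℕ) = 0) := by omega
        simp only [if_pos ht1, if_neg ht2]
        exact bot_lt_iff_ne_bot.mpr hmbot
      · intro t
        by_cases ht : (t : ℕ) = 0
        · simp only [if_pos ht]; exact hbotprime
        · simp only [if_neg ht]; exact hmprime
    rw [hd] at h1
    have : 1 ≤ d := by exact_mod_cast h1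
    omega
  have main : ∀ i : ℕ, 1 ≤ i → i ≤ d → ∃ x : Fin i → R,
      (∀ j : Fin i, (j : ℕ) = 0 → x j = q) ∧ (∀ j, x j ∈ IsLocalRing.maximalIdeal R) ∧
      ∀ P ∈ (Ideal.span (Set.range x)).minimalPrimes, ∃ c : Fin (i+1) → Ideal R,
        StrictMono c ∧ (∀ t, (c t).IsPrime) ∧ c (Fin.last i) = P := by
    intro i
    induction i with
    | zero => omega
    | succ i ih =>
      intro _ hle
      rcases Nat.eq_zero_or_pos i with rfl | hi
      · -- base case : the single element q
        refine ⟨fun _ => q, fun _ _ => rfl, fun _ => hqm, ?_⟩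
        intro P hP
        have hPprime : P.IsPrime := hP.1.1
        have hPq : q ∈ P := hP.1.2 (Ideal.subset_span ⟨0, rfl⟩)
        have hPbot : P ≠ ⊥ := by
          intro hb; rw [hb] at hPq; exact hq0 (by simpa using hPq)
        refine ⟨fun t => if (t : ℕ) = 0 then ⊥ else P, ?_, ?_, ?_⟩
        · intro t1 t2 h12
          have h12' := Fin.lt_def.mp h12
          have ht1 : (t1 : ℕ) = 0 := by omega
          have ht2 : ¬ ((t2 : ℕ) = 0) := by omega
          simp only [if_pos ht1, if_neg ht2]
          exact bot_lt_iff_ne_bot.mpr hPbot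
        · intro t
          by_cases ht : (t : ℕ) = 0
          · simp only [if_pos ht]; exact hbotprime
          · simp only [if_neg ht]; exact hPprime
        · simp [Fin.last]
      · -- inductive step
        obtain ⟨x, hx0, hxm, hxchain⟩ := ih hi (by omega)
        set I := Ideal.span (Set.range x) with hIdef
        have hspanm : I ≤ IsLocalRing.maximalIdeal R := by
          rw [hIdef, Ideal.span_le]; rintro _ ⟨j, rfl⟩; exact hxm j
        -- the maximal ideal is not minimal over I
        have hmnot : IsLocalRing.maximalIdeal R ∉ I.minimalPrimes := by
          intro hmem
          have hminm : ∀ Q : Ideal R, Q.IsPrime → I ≤ Q →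
              Q ≤ IsLocalRing.maximalIdeal R → Q = IsLocalRing.maximalIdeal R := by
            intro Q hQ h1 h2
            exact le_antisymm h2 (hmem.2 ⟨hQ, h1⟩ h2)
          have hnotall : ¬ (∀ p : LTSeries (PrimeSpectrum R), p.length ≤ i) := by
            intro hall
            have hdim : ringKrullDim R ≤ ((i : ℕ) : WithBot (WithTop ℕ)) := by
              show Order.krullDim (PrimeSpectrum R) ≤ _
              exact iSup_le (fun p => by exact WithBot.coe_le_coe.mpr (WithTop.coe_le_coe.mpr (hall p)))
            rw [hd] at hdim
            have : d ≤ i := by exact WithTop.coe_le_coe.mp (WithBot.coe_le_coe.mp hdim)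
            omega
          push_neg at hnotall
          obtain ⟨p, hp⟩ := hnotall
          have hlen : p.length ≤ i := aux_chain_bound x hspanm hminm (h := p.length)
            (fun t => (p t).asIdeal) (fun t1 t2 h12 => p.strictMono h12)
            (fun t => (p t).isPrime)
          omega
        have hfin : I.minimalPrimes.Finite := by
          rw [Ideal.minimalPrimes_eq_comap]
          exact Set.Finite.image _ (minimalPrimes.finite_of_isNoetherianRing (R ⧸ I))
        have hlt_m : ∀ P ∈ I.minimalPrimes, P < IsLocalRing.maximalIdeal R := by
          intro P hP
          refine lt_of_le_of_ne (IsLocalRing.le_maximalIdeal hP.1.1.ne_top) ?_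
          intro he
          exact hmnot (he ▸ hP)
        -- prime avoidance
        have havoid : ¬ ((IsLocalRing.maximalIdeal R : Set R) ⊆
            ⋃ P ∈ (hfin.toFinset : Set (Ideal R)), (P : Set R)) := by
          intro hsub
          rw [Ideal.subset_union_prime (⊥ : Ideal R) (⊥ : Ideal R)
            (fun P hP _ _ => by
              rw [Set.Finite.mem_toFinset] at hP
              exact hP.1.1)] at hsub
          obtain ⟨P, hPmem, hPle⟩ := hsub
          rw [Set.Finite.mem_toFinset] at hPmem
          exact (ne_of_lt (hlt_m P hPmem)).symm
            (le_antisymm (le_of_lt (hlt_m P hPmem)) hPle).symm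
        obtain ⟨y, hym, hyout⟩ := Set.not_subset.mp havoid
        have hynotin : ∀ P ∈ I.minimalPrimes, y ∉ P := by
          intro P hP hyP
          apply hyout
          exact Set.mem_biUnion (Finset.mem_coe.mpr ((Set.Finite.mem_toFinset hfin).mpr hP)) hyP
        -- the new sequence
        refine ⟨fun j => if hj : (j : ℕ) < i then x ⟨j, hj⟩ else y, ?_, ?_, ?_⟩
        · intro j hj
          have : (j : ℕ) < i := by omega
          simp only [dif_pos this]
          exact hx0 _ (by simpa using hj)
        · intro j
          by_cases hj : (j : ℕ) < i
          · simp only [dif_pos hj]; exact hxm _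
          · simp only [dif_neg hj]; exact hym
        · intro P hP
          set x' : Fin (i+1) → R := fun j => if hj : (j : ℕ) < i then x ⟨j, hj⟩ else y with hx'def
          have hIle : I ≤ Ideal.span (Set.range x') := by
            rw [hIdef, Ideal.span_le]
            rintro _ ⟨j, rfl⟩
            apply Ideal.subset_span
            refine ⟨⟨j, by omega⟩, ?_⟩
            simp only [x', dif_pos (show ((⟨(j:ℕ), by omega⟩ : Fin (i+1)) : ℕ) < i from j.isLt)]
          have hIP : I ≤ P := hIle.trans hP.1.2
          haveI := hP.1.1
          obtain ⟨P0, hP0mem, hP0le⟩ := Ideal.exists_minimalPrimes_le (J := P) hIP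
          have hyP : y ∈ P := by
            have : x' (Fin.last i) ∈ P := hP.1.2 (Ideal.subset_span ⟨Fin.last i, rfl⟩)
            simpa [x', Fin.last] using this
          have hP0lt : P0 < P := lt_of_le_of_ne hP0le (by
            intro he
            exact hynotin P0 hP0mem (he ▸ hyP))
          obtain ⟨c0, hc0, hc0p, hc0last⟩ := hxchain P0 hP0mem
          obtain ⟨c', hc', hc'p, hc'last⟩ :=
            aux_chain_extend c0 hc0 hc0p hP.1.1 (hc0last ▸ hP0lt)
          exact ⟨c', hc', hc'p, hc'last⟩
  -- instantiate at i = d and deduce the radical condition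
  obtain ⟨x, hx0, hxm, hxchain⟩ := main d hd1 le_rfl
  refine ⟨x, hd1, hx0, hxm, ?_⟩
  have hall : ∀ P ∈ (Ideal.span (Set.range x)).minimalPrimes,
      P = IsLocalRing.maximalIdeal R := by
    intro P hP
    by_contra hne
    have hlt : P < IsLocalRing.maximalIdeal R :=
      lt_of_le_of_ne (IsLocalRing.le_maximalIdeal hP.1.1.ne_top) hne
    obtain ⟨c, hc, hcp, hclast⟩ := hxchain P hP
    obtain ⟨c', hc', hcp', _⟩ := aux_chain_extend c hc hcp hmprime (hclast ▸ hlt)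
    have hdim := aux_chain_le_krullDim c' hc' hcp'
    rw [hd] at hdim
    have : d + 1 ≤ d := by exact_mod_cast hdim
    omega
  rw [← Ideal.sInf_minimalPrimes]
  apply le_sInf
  intro P hP
  exact le_of_eq (hall P hP).symm

/-- Krull intersection: in a Noetherian local ring, `⋂ t (I + m^t) ⊆ I`. -/
lemma aux_inter {R : Type*} [CommRing R] [IsNoetherianRing R] [IsLocalRing R]
    (I : Ideal R) (hI : I ≤ IsLocalRing.maximalIdeal R) (p : R)
    (hp : ∀ t : ℕ, p ∈ I ⊔ IsLocalRing.maximalIdeal R ^ t) : p ∈ I := by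
  have hInetop : I ≠ ⊤ := by
    intro htop
    rw [htop] at hI
    exact (IsLocalRing.maximalIdeal.isMaximal R).ne_top (top_le_iff.mp hI)
  let ρ : R →+* R ⧸ I := Ideal.Quotient.mk I
  have hsurj : Function.Surjective ρ := Ideal.Quotient.mk_surjective
  have hker : RingHom.ker ρ = I := Ideal.mk_ker
  have hmapnetop : Ideal.map ρ (IsLocalRing.maximalIdeal R) ≠ ⊤ := by
    intro htop
    have := congrArg (Ideal.comap ρ) htop
    rw [Ideal.comap_map_of_surjective ρ hsurj, ← RingHom.ker_eq_comap_bot, hker,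
      Ideal.comap_top, sup_eq_left.mpr hI] at this
    exact (IsLocalRing.maximalIdeal.isMaximal R).ne_top this
  haveI : Nontrivial (R ⧸ I) := Ideal.Quotient.nontrivial_iff.mpr hInetop
  haveI : IsLocalHom ρ := IsLocalHom.of_surjective ρ hsurj
  haveI : IsLocalRing (R ⧸ I) := IsLocalRing.of_surjective ρ hsurj
  have hbot : (⨅ t : ℕ, (Ideal.map ρ (IsLocalRing.maximalIdeal R)) ^ t) = ⊥ :=
    Ideal.iInf_pow_eq_bot_of_isLocalRing _ hmapnetop
  have hρp : ρ p ∈ (⨅ t : ℕ, (Ideal.map ρ (IsLocalRing.maximalIdeal R)) ^ t) := by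
    rw [Ideal.mem_iInf]
    intro t
    have := hp t
    rw [Submodule.mem_sup] at this
    obtain ⟨a, ha, b, hb, hab⟩ := this
    have : ρ p = ρ b := by
      rw [← hab, map_add]
      have : ρ a = 0 := by rw [← RingHom.mem_ker, hker]; exact ha
      rw [this, zero_add]
    rw [this, ← Ideal.map_pow]
    exact Ideal.mem_map_of_mem ρ hb
  rw [hbot] at hρp
  have : ρ p = 0 := by simpa using hρp
  rw [← hker]
  exact this

/-- A Noetherian local domain has finite Krull dimension. -/
lemma aux_dim_nat {R : Type u} [CommRing R] [IsNoetherianRing R] [IsDomain R] [IsLocalRing R] :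
    ∃ d : ℕ, ringKrullDim R = (d : WithBot (WithTop ℕ)) := by
  obtain ⟨s, hs⟩ := IsNoetherian.noetherian (IsLocalRing.maximalIdeal R)
  let n := s.card
  let x : Fin n → R := fun i => (s.equivFin.symm i : R)
  have hxr : Set.range x = (s : Set R) := by
    ext y
    constructor
    · rintro ⟨i, rfl⟩; exact (s.equivFin.symm i).2
    · intro hy; exact ⟨s.equivFin ⟨y, hy⟩, by simp [x]⟩
  have hspan : Ideal.span (Set.range x) = IsLocalRing.maximalIdeal R := by
    rw [hxr, ← hs]
  have hxm : ∀ i, x i ∈ IsLocalRing.maximalIdeal R := by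
    intro i
    rw [← hspan]
    exact Ideal.subset_span ⟨i, rfl⟩
  have hub : ringKrullDim R ≤ ((n : ℕ) : WithBot (WithTop ℕ)) :=
    aux_dim_le x hxm (by rw [hspan]; exact Ideal.le_radical)
  have hlb : ((0 : ℕ) : WithBot (WithTop ℕ)) ≤ ringKrullDim R := by
    have : Nonempty (PrimeSpectrum R) := inferInstance
    exact Order.krullDim_nonneg (α := PrimeSpectrum R)
  cases hrk : ringKrullDim R with
  | bot =>
      rw [hrk] at hlb
      exact absurd hlb (fun h => WithBot.not_coe_le_bot _ h)
  | coe t =>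
      cases t with
      | top =>
          rw [hrk] at hub
          exfalso
          have h2 : ((⊤ : WithTop ℕ) : WithBot (WithTop ℕ)) ≤
              (((n : WithTop ℕ)) : WithBot (WithTop ℕ)) := by
            refine le_trans hub (le_of_eq ?_)
            rfl
          rw [WithBot.coe_le_coe] at h2
          exact absurd (top_le_iff.mp h2) (WithTop.natCast_ne_top n)
      | coe d =>
          exact ⟨d, rfl⟩


end AuxProofs

/-- Let `R` be a Noetherian local domain which is Cohen–Macaulay (every system of parameters is
a regular sequence). If every ideal generated by a system of parameters is integrally closed
(in particular every height-one principal ideal `aR` with `a` part of a system of parameters is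
integrally closed), then `R` is normal, i.e. integrally closed in its fraction field. -/
theorem normal_of_parameter_ideals_integrally_closed (R : Type*) [CommRing R] [IsDomain R]
    [IsNoetherianRing R] [IsLocalRing R]
    (hCM : ∀ (d : ℕ) (x : Fin d → R), IsSystemOfParameters R x →
      ∀ i : Fin d, ∀ z : R,
        z * x i ∈ Ideal.span (x '' {j | (j : ℕ) < (i : ℕ)}) →
        z ∈ Ideal.span (x '' {j | (j : ℕ) < (i : ℕ)}))
    (hic : ∀ (d : ℕ) (x : Fin d → R), IsSystemOfParameters R x →
      idealIntegralClosure (Ideal.span (Set.range x)) = ↑(Ideal.span (Set.range x))) :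
    IsIntegrallyClosed R := by
  rw [isIntegrallyClosed_iff (FractionRing R)]
  intro X hX
  set φ := algebraMap R (FractionRing R) with hφ
  obtain ⟨⟨p, ⟨q, hqnzd⟩⟩, hmk⟩ := IsLocalization.mk'_surjective (nonZeroDivisors R) X
  have hXq : X * φ q = φ p := by rw [← hmk]; exact IsLocalization.mk'_spec _ _ _
  have hq0 : q ≠ 0 := nonZeroDivisors.ne_zero hqnzd
  have hinj : Function.Injective φ := IsFractionRing.injective R (FractionRing R)
  have hφq0 : φ q ≠ 0 := fun h => hq0 (hinj (by rw [h, map_zero]))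
  by_cases hu : IsUnit q
  · obtain ⟨v, hv⟩ := isUnit_iff_exists_inv.mp hu
    refine ⟨p * v, ?_⟩
    calc φ (p * v) = φ p * φ v := map_mul _ _ _
      _ = X * φ q * φ v := by rw [hXq]
      _ = X * φ (q * v) := by rw [map_mul]; ring
      _ = X := by rw [hv, map_one, mul_one]
  have hqm : q ∈ IsLocalRing.maximalIdeal R := (IsLocalRing.mem_maximalIdeal q).mpr hu
  obtain ⟨f, hmonic, heval⟩ := hX
  set n := f.natDegree with hn
  have haeval : (∑ i ∈ Finset.range (n+1), φ (f.coeff i) * X ^ i) = 0 := by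
    have h1 : Polynomial.aeval X f = 0 := by rw [Polynomial.aeval_def]; exact heval
    rw [Polynomial.aeval_eq_sum_range] at h1
    simpa [Algebra.smul_def] using h1
  have hcoeffn : f.coeff n = 1 := hmonic.coeff_natDegree
  have hn1 : 0 < n := by
    by_contra h0
    have hn0 : n = 0 := by omega
    rw [hn0] at haeval
    have hc0 : f.coeff 0 = 1 := by rw [← hn0]; exact hcoeffn
    rw [Finset.sum_range_one, hc0, map_one, pow_zero, mul_one] at haeval
    exact one_ne_zero haeval
  have claim : ∀ t : ℕ, p ∈ Ideal.span {q} ⊔ (IsLocalRing.maximalIdeal R) ^ t := by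
    intro t
    rcases Nat.eq_zero_or_pos t with rfl | ht
    · rw [pow_zero, Ideal.one_eq_top, sup_top_eq]; exact Submodule.mem_top
    obtain ⟨d, hd⟩ := aux_dim_nat (R := R)
    obtain ⟨x, hd1, hx0, hxm, hrad⟩ := aux_exists_param hd q hq0 hqm
    have hpowmem : ∀ i : Fin d, x i ^ t ∈ (IsLocalRing.maximalIdeal R) ^ t :=
      fun i => Ideal.pow_mem_pow (hxm i) t
    have hpowmem1 : ∀ i : Fin d, x i ^ t ∈ IsLocalRing.maximalIdeal R := by
      intro i
      have : x i ^ t = x i ^ (t - 1) * x i := by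
        rw [← pow_succ]; congr 1; omega
      rw [this]
      exact Ideal.mul_mem_left _ _ (hxm i)
    let z : Fin d → R := fun i => if (i : ℕ) = 0 then q else (x i) ^ t
    have hzm : ∀ i, z i ∈ IsLocalRing.maximalIdeal R := by
      intro i
      by_cases hi : (i : ℕ) = 0
      · simp only [z, if_pos hi]; exact hqm
      · simp only [z, if_neg hi]; exact hpowmem1 i
    have hspan_le : Ideal.span (Set.range z) ≤ IsLocalRing.maximalIdeal R := by
      rw [Ideal.span_le]; rintro _ ⟨i, rfl⟩; exact hzm i
    have hzrad : IsLocalRing.maximalIdeal R ≤ (Ideal.span (Set.range z)).radical := by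
      refine hrad.trans ?_
      have hxz : Ideal.span (Set.range x) ≤ (Ideal.span (Set.range z)).radical := by
        rw [Ideal.span_le]
        rintro _ ⟨i, rfl⟩
        by_cases hi : (i : ℕ) = 0
        · apply Ideal.le_radical
          rw [hx0 i hi]
          exact Ideal.subset_span ⟨i, by simp [z, hi]⟩
        · exact ⟨t, Ideal.subset_span ⟨i, by simp [z, hi]⟩⟩
      calc (Ideal.span (Set.range x)).radical
          ≤ ((Ideal.span (Set.range z)).radical).radical := Ideal.radical_mono hxz
        _ = (Ideal.span (Set.range z)).radical := Ideal.radical_idem _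
    have hsop : IsSystemOfParameters R z := ⟨hd.symm, hzrad, hspan_le⟩
    have hcl := hic d z hsop
    have hq_mem : q ∈ Ideal.span (Set.range z) :=
      Ideal.subset_span ⟨⟨0, hd1⟩, by simp [z]⟩
    have hp : p ∈ idealIntegralClosure (Ideal.span (Set.range z)) := by
      refine ⟨n, hn1, fun j => f.coeff (n - j) * q ^ j, ?_, ?_⟩
      · intro j hj1 hjn
        exact Ideal.mul_mem_left _ _ (Ideal.pow_mem_pow hq_mem j)
      · show p ^ n + ∑ j ∈ Finset.range n,
          f.coeff (n - (j+1)) * q ^ (j+1) * p ^ (n - (j+1)) = 0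
        apply hinj
        rw [map_zero]
        have hφp : φ p = X * φ q := hXq.symm
        have hterm : ∀ j ∈ Finset.range n,
            φ (f.coeff (n - (j+1)) * q ^ (j+1) * p ^ (n - (j+1)))
              = (φ q) ^ n * (φ (f.coeff (n - (j+1))) * X ^ (n - (j+1))) := by
          intro j hj
          rw [Finset.mem_range] at hj
          have hsum : (j+1) + (n - (j+1)) = n := by omega
          rw [map_mul, map_mul, map_pow, map_pow, hφp, mul_pow]
          calc φ (f.coeff (n - (j+1))) * φ q ^ (j+1) * (X ^ (n-(j+1)) * φ q ^ (n-(j+1)))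
              = (φ q ^ (j+1) * φ q ^ (n-(j+1))) * (φ (f.coeff (n - (j+1))) * X ^ (n-(j+1))) := by
                ring
            _ = (φ q) ^ n * (φ (f.coeff (n - (j+1))) * X ^ (n-(j+1))) := by
                rw [← pow_add, hsum]
        rw [map_add, map_pow, map_sum, Finset.sum_congr rfl hterm, ← Finset.mul_sum,
          hφp, mul_pow]
        have hreflect : (∑ j ∈ Finset.range n, φ (f.coeff (n - (j+1))) * X ^ (n - (j+1)))
            = ∑ i ∈ Finset.range n, φ (f.coeff i) * X ^ i := by
          rw [← Finset.sum_range_reflect (fun i => φ (f.coeff i) * X ^ i) n]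
          apply Finset.sum_congr rfl
          intro j hj
          rw [Finset.mem_range] at hj
          have : n - (j+1) = n - 1 - j := by omega
          rw [this]
        rw [hreflect]
        have hfull := haeval
        rw [Finset.sum_range_succ, hcoeffn, map_one, one_mul] at hfull
        calc X ^ n * φ q ^ n + φ q ^ n * (∑ i ∈ Finset.range n, φ (f.coeff i) * X ^ i)
            = φ q ^ n * ((∑ i ∈ Finset.range n, φ (f.coeff i) * X ^ i) + X ^ n) := by ring
          _ = 0 := by rw [hfull, mul_zero]
    rw [hcl] at hp
    have hle : Ideal.span (Set.range z) ≤ Ideal.span {q} ⊔ (IsLocalRing.maximalIdeal R) ^ t := by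
      rw [Ideal.span_le]
      rintro _ ⟨i, rfl⟩
      by_cases hi : (i : ℕ) = 0
      · simp only [z, if_pos hi]
        exact le_sup_left (α := Ideal R) (Ideal.mem_span_singleton_self q)
      · simp only [z, if_neg hi]
        exact le_sup_right (α := Ideal R) (hpowmem i)
    exact hle hp
  have hpq : p ∈ Ideal.span {q} :=
    aux_inter _ (by rw [Ideal.span_le]; exact Set.singleton_subset_iff.mpr hqm) p claim
  obtain ⟨c, hc⟩ := Ideal.mem_span_singleton'.mp hpq
  refine ⟨c, ?_⟩
  have hcancel : φ c * φ q = X * φ q := by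
    rw [← map_mul, hc, ← hXq]
  exact mul_right_cancel₀ hφq0 hcancel
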